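/- Fix a real threshold θ > 0 and a positive integer T. For every real input z, the soft-reset integrate-and-fire neuron with constant input x_t = z for all t, run for T timesteps, produces total spike count ∑_{t=1}^{T} s_t = clamp(⌊Tz/θ + 1/2⌋, 0, T), where clamp(n,0,T) = min(max(n,0),T). -/
import Mathlib


/-- Membrane potential of the soft-reset integrate-and-fire neuron: `v 0 = θ/2` and
`v (t+1) = v t + x t - θ·s`, where `x t` is the input at timestep `t+1` and `s` is the spike. -/
noncomputable def ifV (θ : ℝ) (x : ℕ → ℝ) : ℕ → ℝ
  | 0 => θ / 2
  | t + 1 => ifV θ x t + x t - θ * (if θ ≤ ifV θ x t + x t then 1 else 0)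

/-- Spike emitted at timestep `t+1` (0-indexed `t`): `1` if `v t + x t ≥ θ`, else `0`. -/
noncomputable def ifS (θ : ℝ) (x : ℕ → ℝ) (t : ℕ) : ℤ :=
  if θ ≤ ifV θ x t + x t then 1 else 0

lemma ifV_eq (θ z : ℝ) (t : ℕ) :
    ifV θ (fun _ => z) t
      = θ/2 + t*z - θ * ((∑ i ∈ Finset.range t, ifS θ (fun _ => z) i : ℤ) : ℝ) := by
  induction t with
  | zero => simp [ifV]
  | succ t ih =>
    have h1 : ifV θ (fun _ => z) (t+1)
        = ifV θ (fun _ => z) t + z - θ * (if θ ≤ ifV θ (fun _ => z) t + z then 1 else 0) := rfl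
    have h2 : ifS θ (fun _ => z) t = if θ ≤ ifV θ (fun _ => z) t + z then 1 else 0 := rfl
    rw [Finset.sum_range_succ, h1, h2]
    by_cases h : θ ≤ ifV θ (fun _ => z) t + z <;>
      (first | rw [if_pos h, if_pos h, ih] | rw [if_neg h, if_neg h, ih]) <;> push_cast <;> ring

lemma spike_iff (θ : ℝ) (hθ : 0 < θ) (z : ℝ) (t : ℕ) :
    ifS θ (fun _ => z) t
      = if (∑ i ∈ Finset.range t, ifS θ (fun _ => z) i) + 1 ≤ ⌊((t:ℝ)+1) * z / θ + 1/2⌋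
        then 1 else 0 := by
  set S : ℤ := ∑ i ∈ Finset.range t, ifS θ (fun _ => z) i with hS
  have h2 : ifS θ (fun _ => z) t = if θ ≤ ifV θ (fun _ => z) t + z then 1 else 0 := rfl
  rw [h2]
  congr 1
  rw [ifV_eq θ z t, ← hS, Int.le_floor, eq_iff_iff]
  have hq : ((t:ℝ)+1)*z/θ * θ = ((t:ℝ)+1)*z := div_mul_cancel₀ _ (ne_of_gt hθ)
  constructor
  · intro h
    push_cast
    nlinarith [hq, hθ]
  · intro h
    push_cast at h
    nlinarith [hq, hθ]

/-- For constant input `z` over `T` timesteps, the total spike count is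
`clamp(⌊Tz/θ + 1/2⌋, 0, T)`. -/
theorem spike_count_eq_clamp (θ : ℝ) (hθ : 0 < θ) (T : ℕ) (hT : 0 < T) (z : ℝ) :
    ∑ t ∈ Finset.range T, ifS θ (fun _ => z) t =
      min (max ⌊(T : ℝ) * z / θ + 1 / 2⌋ 0) (T : ℤ) := by
  clear hT
  induction T with
  | zero => simp
  | succ t ih =>
    rw [Finset.sum_range_succ, spike_iff θ hθ z t, ih]
    have hcast : ((t+1 : ℕ) : ℝ) = (t:ℝ)+1 := by push_cast; ring
    have hcast2 : ((t+1:ℕ):ℤ) = (t:ℤ)+1 := by push_cast; ring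
    rw [hcast, hcast2]
    set a1 : ℤ := ⌊((t:ℝ)+1) * z / θ + 1/2⌋ with ha1
    set a0 : ℤ := ⌊(t:ℝ) * z / θ + 1/2⌋ with ha0
    set C : ℤ := min (max a0 0) (t:ℤ) with hC
    by_cases h : C + 1 ≤ a1
    · rw [if_pos h]
      by_cases hz : z ≤ θ
      · -- a1 ≤ a0 + 1 and a0 ≤ t
        have h1 : a1 ≤ a0 + 1 := by
          have hle : ((t:ℝ)+1) * z / θ + 1/2 ≤ ((t:ℝ) * z / θ + 1/2) + 1 := by
            have h0 : ((t:ℝ)+1) * z / θ ≤ ((t:ℝ) * z + θ) / θ :=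
              (div_le_div_iff_of_pos_right hθ).mpr (by nlinarith)
            rw [add_div, div_self (ne_of_gt hθ)] at h0
            linarith
          calc a1 ≤ ⌊((t:ℝ) * z / θ + 1/2) + 1⌋ := Int.floor_le_floor hle
            _ = a0 + 1 := by rw [Int.floor_add_one]
        have h2 : a0 ≤ (t:ℤ) := by
          rw [ha0, Int.floor_le_iff]
          push_cast
          have : (t:ℝ) * z / θ ≤ (t:ℝ) := by
            rw [div_le_iff₀ hθ]
            nlinarith [Nat.cast_nonneg (α := ℝ) t]
          linarith
        omega
      · push_neg at hz
        have h1 : (t:ℤ) + 1 ≤ a1 := by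
          rw [ha1, Int.le_floor]
          push_cast
          have : ((t:ℝ)+1) ≤ ((t:ℝ)+1) * z / θ := by
            rw [le_div_iff₀ hθ]
            nlinarith [Nat.cast_nonneg (α := ℝ) t]
          linarith
        have h2 : (t:ℤ) ≤ a0 := by
          rw [ha0, Int.le_floor]
          push_cast
          have : (t:ℝ) ≤ (t:ℝ) * z / θ := by
            rw [le_div_iff₀ hθ]
            nlinarith [Nat.cast_nonneg (α := ℝ) t]
          linarith
        omega
    · rw [if_neg h]
      by_cases hC1 : C ≤ 0
      · have h1 : a1 ≤ 0 := by omega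
        omega
      · -- C ≥ 1, so a0 ≥ 1 and t ≥ 1, hence z > 0, hence a0 ≤ a1
        have ht1 : 1 ≤ (t:ℤ) := by omega
        have ha01 : 1 ≤ a0 := by omega
        have hz : 0 ≤ z := by
          by_contra hzn
          push_neg at hzn
          have : ((1:ℤ):ℝ) ≤ (t:ℝ) * z / θ + 1/2 := Int.le_floor.mp ha01
          rw [div_add' _ _ _ (ne_of_gt hθ), le_div_iff₀ hθ] at this
          push_cast at this
          have ht1r : (1:ℝ) ≤ (t:ℝ) := by exact_mod_cast ht1
          nlinarith
        have h1 : a0 ≤ a1 := by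
          apply Int.floor_le_floor
          have h0 : (t:ℝ) * z / θ ≤ ((t:ℝ)+1) * z / θ :=
            (div_le_div_iff_of_pos_right hθ).mpr (by nlinarith)
          linarith
        omega
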